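/- With the coefficients Ξ_k as defined in the context, ∑_{k=0}^{M} (k+1)·|Ξ_k| ≤ C·M/16 + (2/π)·log M + π, where C = 32·(1/3 + 1/π). -/

import Mathlib

open Real

/-- `g(u) = -(1-u)·cot(πu) - 1/π` for `u < 1`, and `g(u) = 0` for `u ≥ 1`. -/
noncomputable def selbergG (u : ℝ) : ℝ :=
  if u < 1 then -(1 - u) * Real.cot (Real.pi * u) - 1 / Real.pi else 0

/-- The coefficients `Ξ_k`, `0 ≤ k ≤ M`, of the Beurling–Selberg minorant:
`Ξ_k = ((β-α)/π)·[k=0] - (1 - k/(M+1))·(cos kα + cos kβ)/(M+1)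
       - g(k/(M+1))·(sin kβ - sin kα)/(M+1)
       + (1 - (k+2)/(M+1))·(cos (k+2)α + cos (k+2)β)/(M+1)
       + g((k+2)/(M+1))·(sin (k+2)β - sin (k+2)α)/(M+1)`,
where for `k = 0` the term involving `g(k/(M+1))` is interpreted as `0`, and for
`k ∈ {M-1, M}` the last two terms are omitted. -/
noncomputable def selbergXi (α β : ℝ) (M k : ℕ) : ℝ :=
  (if k = 0 then (β - α) / Real.pi else 0)
    - (1 - (k : ℝ) / (M + 1)) * (Real.cos (k * α) + Real.cos (k * β)) / (M + 1)
    - (if k = 0 then 0 else selbergG ((k : ℝ) / (M + 1)))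
        * (Real.sin (k * β) - Real.sin (k * α)) / (M + 1)
    + (if k + 2 ≤ M then
        (1 - ((k : ℝ) + 2) / (M + 1)) * (Real.cos ((k + 2) * α) + Real.cos ((k + 2) * β)) / (M + 1)
          + selbergG (((k : ℝ) + 2) / (M + 1))
            * (Real.sin ((k + 2) * β) - Real.sin ((k + 2) * α)) / (M + 1)
      else 0)

/-!
Write `Ξ_k = [k = 0] (β - α)/π - c_k + [k + 2 ≤ M] c_{k+2}`, where `c_j` (`selbergCoeff`) is the
contribution of frequency `j`. On `[0, 1)` we have `1 - u ≥ 0` and `g(u) ≤ 0` (the latter is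
`x cos x ≤ sin x` on `[0, π]`), so `|c_j| ≤ b_j := 2 (1 - j/(M+1) - g(j/(M+1)))/(M+1)`.
In the weighted sum each `b_j` is counted with weight `(j + 1) + (j - 1) = 2j`, apart from an
extra `b_0`. The polynomial part of `∑ j b_j` is elementary, and the reflection identity
`u g(u) + (1 - u) g(1 - u) = -1/π` evaluates its `g`-part exactly as `M/π`.
-/

open Finset

theorem mul_cos_le_sin {x : ℝ} (h0 : 0 ≤ x) (hπ : x ≤ π) : x * cos x ≤ sin x := by
  rcases lt_or_ge x (π / 2) with hx | hx
  · have hcos : 0 < cos x := cos_pos_of_mem_Ioo ⟨by linarith, hx⟩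
    have htan := le_tan h0 hx
    rwa [tan_eq_sin_div_cos, le_div_iff₀ hcos] at htan
  · have hcos : cos x ≤ 0 := cos_nonpos_of_pi_div_two_le_of_le hx (by linarith)
    nlinarith [sin_nonneg_of_nonneg_of_le_pi h0 hπ]

theorem selbergG_nonpos {u : ℝ} (hu : 0 ≤ u) : selbergG u ≤ 0 := by
  unfold selbergG
  split_ifs with h1
  · rcases hu.eq_or_lt with rfl | hu
    · simp [cot_eq_cos_div_sin, pi_nonneg]
    · have hsin : 0 < sin (π * u) := sin_pos_of_pos_of_lt_pi (by positivity) (by nlinarith [pi_pos])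
      -- with `x = π (1 - u)` this is `x cos x ≤ sin x`
      have key := mul_cos_le_sin (x := π * (1 - u)) (by nlinarith [pi_pos]) (by nlinarith [pi_pos])
      rw [show π * (1 - u) = π - π * u by ring, cos_pi_sub, sin_pi_sub] at key
      rw [cot_eq_cos_div_sin]
      have : -(1 - u) * (cos (π * u) / sin (π * u)) ≤ 1 / π := by
        rw [mul_div_assoc', div_le_div_iff₀ hsin pi_pos]
        nlinarith
      linarith
  · rfl

theorem mul_selbergG_add_mul_selbergG_one_sub {u : ℝ} (h0 : 0 < u) (h1 : u < 1) :
    u * selbergG u + (1 - u) * selbergG (1 - u) = -1 / π := by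
  have hcot : cot (π * (1 - u)) = -cot (π * u) := by
    rw [show π * (1 - u) = π - π * u by ring, cot_eq_cos_div_sin, cot_eq_cos_div_sin,
      cos_pi_sub, sin_pi_sub, neg_div]
  rw [selbergG, selbergG, if_pos h1, if_pos (by linarith), hcot]
  ring

theorem two_nsmul_sum_range_of_add_reflect {M : Type*} [AddCommMonoid M] {f : ℕ → M} {n : ℕ}
    {c : M} (h : ∀ i < n, f i + f (n - 1 - i) = c) : 2 • ∑ i ∈ range n, f i = n • c := by
  rw [two_nsmul]
  nth_rewrite 2 [← sum_range_reflect]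
  rw [← sum_add_distrib, sum_congr rfl fun i hi => h i (mem_range.1 hi), sum_const, card_range]

theorem sum_range_mul_sub (n : ℕ) (m : ℝ) :
    ∑ j ∈ range n, (j : ℝ) * (m - j) = n * (n - 1) * (3 * m - 2 * n + 1) / 6 := by
  induction n with
  | zero => simp
  | succ n ih => rw [sum_range_succ, ih]; push_cast; ring

theorem sum_range_succ_mul_ite_add_two (b : ℕ → ℝ) (M : ℕ) :
    ∑ k ∈ range (M + 1), ((k : ℝ) + 1) * (if k + 2 ≤ M then b (k + 2) else 0) =
      ∑ j ∈ range (M + 1), ((j : ℝ) - 1) * b j + b 0 := by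
  rcases M with _ | m
  · simp
  · rw [sum_range_succ, sum_range_succ, sum_range_succ', sum_range_succ']
    simp only [if_neg (by omega : ¬m + 1 + 2 ≤ m + 1), if_neg (by omega : ¬m + 2 ≤ m + 1)]
    push_cast
    ring_nf
    refine sum_congr rfl fun k hk => ?_
    rw [if_pos (by simp at hk; omega)]

theorem sum_mul_abs_ite_sub_add_ite_le (a : ℝ) {c b : ℕ → ℝ} {M : ℕ}
    (hcb : ∀ j ≤ M, |c j| ≤ b j) :
    ∑ k ∈ range (M + 1), ((k : ℝ) + 1) *
        |(if k = 0 then a else 0) - c k + (if k + 2 ≤ M then c (k + 2) else 0)| ≤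
      |a| + b 0 + 2 * ∑ j ∈ range (M + 1), (j : ℝ) * b j := by
  have hterm : ∀ k ∈ range (M + 1),
      |(if k = 0 then a else 0) - c k + (if k + 2 ≤ M then c (k + 2) else 0)| ≤
        (if k = 0 then |a| else 0) + b k + (if k + 2 ≤ M then b (k + 2) else 0) := by
    intro k hk
    have hk : k ≤ M := Nat.lt_succ_iff.1 (mem_range.1 hk)
    refine (abs_add_le _ _).trans (add_le_add ((abs_sub _ _).trans (add_le_add ?_ (hcb k hk))) ?_)
    · split_ifs <;> simp
    · split_ifs with h
      · exact hcb _ h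
      · simp
  calc _ ≤ ∑ k ∈ range (M + 1), ((k : ℝ) + 1) *
          ((if k = 0 then |a| else 0) + b k + (if k + 2 ≤ M then b (k + 2) else 0)) :=
        sum_le_sum fun k hk => mul_le_mul_of_nonneg_left (hterm k hk) (by positivity)
    _ = |a| + b 0 + 2 * ∑ j ∈ range (M + 1), (j : ℝ) * b j := by
      have ha : ∑ k ∈ range (M + 1), ((k : ℝ) + 1) * (if k = 0 then |a| else 0) = |a| := by
        simp
      have hb : ∑ k ∈ range (M + 1), ((k : ℝ) + 1) * b k
          + ∑ k ∈ range (M + 1), ((k : ℝ) - 1) * b k = 2 * ∑ k ∈ range (M + 1), (k : ℝ) * b k := by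
        rw [← sum_add_distrib, mul_sum]
        exact sum_congr rfl fun _ _ => by ring
      simp only [mul_add, sum_add_distrib, sum_range_succ_mul_ite_add_two, ha]
      linarith

/-- The `k = 0` convention of `selbergXi` is automatic here: the sine factor vanishes at `j = 0`. -/
noncomputable def selbergCoeff (α β : ℝ) (M j : ℕ) : ℝ :=
  ((1 - (j : ℝ) / (M + 1)) * (cos (j * α) + cos (j * β))
    + selbergG ((j : ℝ) / (M + 1)) * (sin (j * β) - sin (j * α))) / (M + 1)

noncomputable def selbergCoeffBound (M j : ℕ) : ℝ :=
  2 * ((1 - (j : ℝ) / (M + 1)) - selbergG ((j : ℝ) / (M + 1))) / (M + 1)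

theorem selbergXi_eq (α β : ℝ) (M k : ℕ) :
    selbergXi α β M k = (if k = 0 then (β - α) / π else 0) - selbergCoeff α β M k
      + (if k + 2 ≤ M then selbergCoeff α β M (k + 2) else 0) := by
  unfold selbergXi selbergCoeff
  rcases eq_or_ne k 0 with rfl | hk
  · split_ifs <;> simp <;> ring
  · simp only [if_neg hk]
    split_ifs <;> push_cast <;> ring

theorem abs_selbergCoeff_le (α β : ℝ) {M j : ℕ} (hj : j ≤ M) :
    |selbergCoeff α β M j| ≤ selbergCoeffBound M j := by
  have hN : (0 : ℝ) < M + 1 := by positivity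
  have hu : 0 ≤ 1 - (j : ℝ) / (M + 1) := by
    rw [sub_nonneg, div_le_one hN]; exact_mod_cast hj.trans (Nat.le_succ M)
  have hg := selbergG_nonpos (u := (j : ℝ) / (M + 1)) (by positivity)
  have hcos : |cos (j * α) + cos (j * β)| ≤ 2 :=
    (abs_add_le _ _).trans (by linarith [abs_cos_le_one (j * α), abs_cos_le_one (j * β)])
  have hsin : |sin (j * β) - sin (j * α)| ≤ 2 :=
    (abs_sub _ _).trans (by linarith [abs_sin_le_one (j * α), abs_sin_le_one (j * β)])
  rw [selbergCoeff, selbergCoeffBound, abs_div, abs_of_pos hN]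
  refine div_le_div_of_nonneg_right ((abs_add_le _ _).trans ?_) hN.le
  rw [abs_mul, abs_mul, abs_of_nonneg hu, abs_of_nonpos hg]
  nlinarith [mul_le_mul_of_nonneg_left hcos hu, mul_le_mul_of_nonneg_left hsin (neg_nonneg.2 hg)]

theorem sum_range_mul_selbergG (M : ℕ) :
    ∑ j ∈ range (M + 1), (j : ℝ) / (M + 1) * selbergG ((j : ℝ) / (M + 1)) = -M / (2 * π) := by
  have hN : (0 : ℝ) < M + 1 := by positivity
  have hrefl : ∀ i < M, ((i + 1 : ℕ) : ℝ) / (M + 1) * selbergG (((i + 1 : ℕ) : ℝ) / (M + 1))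
      + ((M - 1 - i + 1 : ℕ) : ℝ) / (M + 1) * selbergG (((M - 1 - i + 1 : ℕ) : ℝ) / (M + 1))
      = -1 / π := by
    intro i hi
    have hi' : (i : ℝ) + 1 < M + 1 := by exact_mod_cast Nat.succ_lt_succ hi
    have hflip : ((M - 1 - i + 1 : ℕ) : ℝ) / (M + 1) = 1 - ((i + 1 : ℕ) : ℝ) / (M + 1) := by
      rw [show M - 1 - i + 1 = M - i by omega, Nat.cast_sub hi.le]
      field_simp
      push_cast
      ring
    rw [hflip]
    exact mul_selbergG_add_mul_selbergG_one_sub (by positivity) (by push_cast; rwa [div_lt_one hN])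
  have hsum := two_nsmul_sum_range_of_add_reflect hrefl
  rw [nsmul_eq_mul, nsmul_eq_mul] at hsum
  rw [sum_range_succ', eq_div_iff (by positivity)]
  simp only [CharP.cast_eq_zero, zero_div, zero_mul, add_zero]
  field_simp at hsum ⊢
  linarith

-- `cot 0 = 0` in Mathlib, so `selbergG 0 = -1 / π`.
theorem selbergCoeffBound_zero (M : ℕ) : selbergCoeffBound M 0 = 2 * (1 + 1 / π) / (M + 1) := by
  simp [selbergCoeffBound, selbergG, cot_eq_cos_div_sin]

theorem sum_range_mul_selbergCoeffBound (M : ℕ) :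
    ∑ j ∈ range (M + 1), (j : ℝ) * selbergCoeffBound M j = M * (M + 2) / (3 * (M + 1)) + M / π := by
  have hterm : ∀ j ∈ range (M + 1), (j : ℝ) * selbergCoeffBound M j =
      2 / (M + 1) ^ 2 * ((j : ℝ) * ((M + 1 : ℝ) - j))
        - 2 * ((j : ℝ) / (M + 1) * selbergG ((j : ℝ) / (M + 1))) := by
    intro j _
    rw [selbergCoeffBound]
    field_simp
  rw [sum_congr rfl hterm, sum_sub_distrib, ← mul_sum, ← mul_sum, sum_range_mul_sub,
    sum_range_mul_selbergG]
  field_simp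
  push_cast
  ring

/-- For `0 ≤ α ≤ β ≤ π` and `M ≥ 8`:
`∑_{k=0}^{M} (k+1)·|Ξ_k| ≤ C·M/16 + (2/π) log M + π` with `C = 32(1/3 + 1/π)`. -/
theorem xi_weighted_sum_bound' (α β : ℝ) (hα : 0 ≤ α) (hαβ : α ≤ β) (hβ : β ≤ Real.pi)
    (M : ℕ) (hM : 8 ≤ M) :
    ∑ k ∈ Finset.range (M + 1), ((k : ℝ) + 1) * |selbergXi α β M k| ≤
      32 * (1 / 3 + 1 / Real.pi) * M / 16 + 2 / Real.pi * Real.log M + Real.pi := by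
  have hM8 : (8 : ℝ) ≤ M := by exact_mod_cast hM
  have hβα : |(β - α) / π| ≤ 1 := by
    rw [abs_of_nonneg (div_nonneg (by linarith) pi_pos.le), div_le_one pi_pos]
    linarith
  have hlog : 0 ≤ 2 / π * log M := mul_nonneg (by positivity) (log_nonneg (by linarith))
  have hb0 : 2 * (1 + 1 / π) / (M + 1) ≤ 1 / 2 := by
    rw [div_le_iff₀ (by positivity)]
    nlinarith [pi_gt_three, one_div_lt_one_div_of_lt three_pos pi_gt_three]
  have hquad : (M : ℝ) * (M + 2) / (3 * (M + 1)) ≤ (M + 1) / 3 := by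
    rw [div_le_div_iff₀ (by positivity) (by positivity)]
    nlinarith
  simp_rw [selbergXi_eq]
  refine (sum_mul_abs_ite_sub_add_ite_le _ fun j hj => abs_selbergCoeff_le α β hj).trans ?_
  rw [selbergCoeffBound_zero, sum_range_mul_selbergCoeffBound,
    show 32 * (1 / 3 + 1 / π) * (M : ℝ) / 16 = 2 / 3 * M + 2 * (M / π) by ring]
  linarith [pi_gt_three]
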